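/- arXiv:2308.09797 — 4 statements merged into one kernel-verified Lean document; each statement's English description precedes it below -/
import Mathlib

section
/- The diversifying choice function is stationary: for all z, z' : S → ℝ≥0 one has C(z ∨ z') = C(C(z) ∨ z'), where ∨ denotes the pointwise maximum; in particular C is idempotent: C(C(z)) = C(z) for all z. -/
open scoped NNReal

/-- `IsDivChoice q z w` asserts that `w = C(z)`, where `C` is the diversifying choice
function with quota `q` on coordinates indexed by the finite set `S`:
if `|z| = ∑ e, z e ≤ q` then `C(z) = z`, and otherwise `C(z) e = min r (z e)` for all `e`,
where `r ≥ 0` is the (unique) cutting height satisfying `∑ e, min r (z e) = q`. -/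
def IsDivChoice {S : Type*} [Fintype S] (q : ℝ≥0) (z w : S → ℝ≥0) : Prop :=
  ((∑ e, z e) ≤ q ∧ w = z) ∨
    (q < ∑ e, z e ∧ ∃ r : ℝ≥0, (∑ e, min r (z e)) = q ∧ w = fun e => min r (z e))

/-!
Write `x ⊓ r` for the truncation `e ↦ min r (x e)`. If `C(z) = z ⊓ r` is a proper cut, then
`C(z) ∨ z'` carries mass at least `q` below height `r`, so its choice is a truncation
`(C(z) ∨ z') ⊓ s` at some height `s ≤ r`; and below such a height the lattice identity
`((z ⊓ r) ∨ z') ⊓ s = (z ∨ z') ⊓ s` makes it a valid choice for `z ∨ z'` as well.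
Stationarity then follows because the choice is unique: two truncations of the same vector
with the same total mass coincide, as one dominates the other.
-/

section

variable {S : Type*} [Fintype S]

section

variable {M : Type*} [AddCommMonoid M] [LinearOrder M] [IsOrderedCancelAddMonoid M]

lemma eq_of_le_of_sum_le {f g : S → M} (hle : ∀ e, f e ≤ g e)
    (hsum : ∑ e, g e ≤ ∑ e, f e) : f = g :=
  funext fun e => (Finset.sum_eq_sum_iff_of_le fun i _ => hle i).mp
    ((Finset.sum_le_sum fun i _ => hle i).antisymm hsum) e (Finset.mem_univ e)

lemma truncate_eq_of_sum_eq {x : S → M} {r r' : M}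
    (hsum : ∑ e, min r (x e) = ∑ e, min r' (x e)) :
    (fun e => min r (x e)) = fun e => min r' (x e) := by
  rcases le_total r r' with h | h
  · exact eq_of_le_of_sum_le (fun e => min_le_min_right _ h) hsum.ge
  · exact (eq_of_le_of_sum_le (fun e => min_le_min_right _ h) hsum.le).symm

end

lemma min_max_min_of_le {α : Type*} [LinearOrder α] {r s : α} (hs : s ≤ r) (a b : α) :
    min s (max (min r a) b) = min s (max a b) := by
  rw [min_max_distrib_left, min_max_distrib_left, ← min_assoc, min_eq_left hs]

namespace IsDivChoice

variable {q : ℝ≥0} {x w w' : S → ℝ≥0}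

theorem unique (h : IsDivChoice q x w) (h' : IsDivChoice q x w') : w = w' := by
  rcases h with ⟨hle, rfl⟩ | ⟨hlt, r, hr, rfl⟩ <;>
    rcases h' with ⟨hle', rfl⟩ | ⟨hlt', r', hr', rfl⟩
  · rfl
  · exact absurd hlt' hle.not_gt
  · exact absurd hlt hle'.not_gt
  · exact truncate_eq_of_sum_eq (hr.trans hr'.symm)

theorem sum_le (h : IsDivChoice q x w) : ∑ e, w e ≤ q := by
  rcases h with ⟨hle, rfl⟩ | ⟨-, r, hr, rfl⟩
  · exact hle
  · exact hr.le

theorem idempotent (h : IsDivChoice q x w) (h' : IsDivChoice q w w') : w' = w :=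
  h'.unique (Or.inl ⟨h.sum_le, rfl⟩)

theorem exists_truncate_of_le_sum_min {r : ℝ≥0} (hq : q ≤ ∑ e, min r (x e))
    (h : IsDivChoice q x w) :
    ∃ s ≤ r, ∑ e, min s (x e) = q ∧ w = fun e => min s (x e) := by
  rcases h with ⟨hle, hw⟩ | ⟨-, r', hr', rfl⟩
  · have htrunc : (fun e => min r (x e)) = x :=
      eq_of_le_of_sum_le (fun e => min_le_right _ _) (hle.trans hq)
    have hsum : ∑ e, min r (x e) = ∑ e, x e := congrArg (fun f => ∑ e, f e) htrunc
    exact ⟨r, le_rfl, (hsum.trans_le hle).antisymm hq, hw.trans htrunc.symm⟩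
  · rcases le_total r' r with h | h
    · exact ⟨r', h, hr', rfl⟩
    · have hsum : ∑ e, min r (x e) = ∑ e, min r' (x e) :=
        le_antisymm (Finset.sum_le_sum fun e _ => min_le_min_right _ h) (hr'.le.trans hq)
      exact ⟨r, le_rfl, hsum.trans hr', truncate_eq_of_sum_eq hsum.symm⟩

theorem of_max_truncate {z z' : S → ℝ≥0} {r : ℝ≥0} (hz : q < ∑ e, z e)
    (hr : ∑ e, min r (z e) = q) (h : IsDivChoice q (fun e => max (min r (z e)) (z' e)) w) :
    IsDivChoice q (fun e => max (z e) (z' e)) w := by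
  have hq : q ≤ ∑ e, min r (max (min r (z e)) (z' e)) := hr.ge.trans <|
    Finset.sum_le_sum fun e _ => le_min (min_le_left _ _) (le_max_left _ _)
  obtain ⟨s, hsr, hs, rfl⟩ := exists_truncate_of_le_sum_min hq h
  simp only [min_max_min_of_le hsr] at hs ⊢
  exact Or.inr ⟨hz.trans_le (Finset.sum_le_sum fun e _ => le_max_left _ _), s, hs, rfl⟩

end IsDivChoice

end

/-- The diversifying choice function is stationary:
`C(z ∨ z') = C(C(z) ∨ z')` for all `z, z'` (where `∨` is the pointwise maximum);
in particular `C` is idempotent: `C(C(z)) = C(z)`. -/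
theorem divChoice_stationary {S : Type*} [Fintype S] (q : ℝ≥0) :
    (∀ z z' w₁ cz w₂ : S → ℝ≥0,
      IsDivChoice q (fun e => max (z e) (z' e)) w₁ → IsDivChoice q z cz →
      IsDivChoice q (fun e => max (cz e) (z' e)) w₂ → w₁ = w₂) ∧
    (∀ z cz ccz : S → ℝ≥0, IsDivChoice q z cz → IsDivChoice q cz ccz → ccz = cz) := by
  refine ⟨fun z z' w₁ cz w₂ h₁ hz h₂ => ?_, fun _ _ _ => IsDivChoice.idempotent⟩
  rcases hz with ⟨-, rfl⟩ | ⟨hlt, r, hr, rfl⟩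
  · exact h₁.unique h₂
  · exact h₁.unique (IsDivChoice.of_max_truncate hlt hr h₂)
end

section
/- Let z, z' : S → ℝ≥0 both be rational and fully filling (|z| = |z'| = q) for the diversifying choice function, and suppose z ⪰ z' (i.e. C(z ∨ z') = z). Then max_{e∈S} z(e) ≤ max_{e∈S} z'(e) and H(z) ⊇ H(z'). -/
open scoped NNReal

/-- The head `H(z)` of a rational vector `z`: if `z` is fully filling (`∑ e, z e = q`)
it is the set of coordinates where `z` attains its maximum, and otherwise it is `∅`. -/
def divHead {S : Type*} [Fintype S] (q : ℝ≥0) (z : S → ℝ≥0) : Set S :=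
  {e | (∑ e', z e') = q ∧ z e = Finset.univ.sup z}

/-- The tail `T(z)` is the complement of the head. -/
def divTail {S : Type*} [Fintype S] (q : ℝ≥0) (z : S → ℝ≥0) : Set S :=
  {e | e ∉ divHead q z}

/-
The choice function only ever cuts a vector down to its own maximum: if `C(w) = z` then
`z = min (max z) w` pointwise. Put `M = max z`, `M' = max z'` and `w = z ∨ z'`. If `M' < M`,
then `z' ≤ min M w = z`, and since `|z'| = |z|` this forces `z' = z`, contradicting `M' < M`.
Hence `M ≤ M'`, and at a coordinate where `z'` attains `M'` we get `z e = min M (w e) = M`.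
-/

namespace IsDivChoice

variable {S : Type*} [Fintype S] {q : ℝ≥0} {w z : S → ℝ≥0}

theorem le (h : IsDivChoice q w z) : z ≤ w := by
  rcases h with ⟨-, rfl⟩ | ⟨-, r, -, rfl⟩
  · exact le_rfl
  · exact fun e => min_le_right r (w e)

theorem eq_min_sup (h : IsDivChoice q w z) (e : S) : z e = min (Finset.univ.sup z) (w e) := by
  refine le_antisymm (le_min (Finset.le_sup (Finset.mem_univ e)) (h.le e)) ?_
  rcases h with ⟨-, rfl⟩ | ⟨-, r, -, rfl⟩
  · exact min_le_right _ _
  · exact min_le_min_right _ (Finset.sup_le fun e _ => min_le_left r (w e))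

end IsDivChoice

theorem Fintype.eq_of_le_of_sum_eq {S M : Type*} [Fintype S] [AddCommMonoid M] [PartialOrder M]
    [IsOrderedCancelAddMonoid M] {f g : S → M} (hle : f ≤ g) (hsum : ∑ e, f e = ∑ e, g e) :
    f = g :=
  eq_of_le_of_not_lt hle fun hlt => (Fintype.sum_strictMono hlt).ne hsum

theorem divChoice_pref_head_general {S : Type*} [Fintype S] (q : ℝ≥0) (z z' : S → ℝ≥0)
    (hfull : (∑ e, z e) = q) (hfull' : (∑ e, z' e) = q)
    (hpref : IsDivChoice q (fun e => max (z e) (z' e)) z) :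
    Finset.univ.sup z ≤ Finset.univ.sup z' ∧ divHead q z' ⊆ divHead q z := by
  have hz := hpref.eq_min_sup
  have hsup : Finset.univ.sup z ≤ Finset.univ.sup z' := by
    by_contra! hlt
    have hle : z' ≤ z := fun e => (hz e).symm ▸
      le_min ((Finset.le_sup (Finset.mem_univ e)).trans hlt.le) (le_max_right _ _)
    rw [Fintype.eq_of_le_of_sum_eq hle (hfull'.trans hfull.symm)] at hlt
    exact hlt.false
  refine ⟨hsup, fun e ⟨_, hmax'⟩ => ⟨hfull, le_antisymm (Finset.le_sup (Finset.mem_univ e)) ?_⟩⟩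
  calc Finset.univ.sup z = min (Finset.univ.sup z) (z' e) := by rw [hmax', min_eq_left hsup]
    _ ≤ min (Finset.univ.sup z) (max (z e) (z' e)) := min_le_min_left _ (le_max_right _ _)
    _ = z e := (hz e).symm

/-- For rational fully filling `z, z'` (`|z| = |z'| = q`) with
`z ⪰ z'` (i.e. `C(z ∨ z') = z`): the maximum value of `z` is at most the maximum value
of `z'`, and `H(z) ⊇ H(z')`. -/
theorem divChoice_pref_head {S : Type*} [Fintype S] (q : ℝ≥0) (z z' : S → ℝ≥0)
    (hz : IsDivChoice q z z) (hz' : IsDivChoice q z' z')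
    (hfull : (∑ e, z e) = q) (hfull' : (∑ e, z' e) = q)
    (hpref : IsDivChoice q (fun e => max (z e) (z' e)) z) :
    Finset.univ.sup z ≤ Finset.univ.sup z' ∧ divHead q z' ⊆ divHead q z :=
  divChoice_pref_head_general q z z' hfull hfull' hpref
end

section
/- Polarity of the two sides: if x and y are stable assignments of the diversifying bipartite market such that x_i ⪰ y_i for all firms i ∈ F, then y_j ⪰ x_j for all workers j ∈ W. -/
open scoped NNReal

attribute [local instance] Classical.propDecidable

/-- `IsDivChoiceOn S qv z w` asserts that, on the coordinates in the finite set `S`,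
`w` agrees with the value of the diversifying choice function with quota `qv` applied
to the restriction of `z` to `S`: if `∑_{e ∈ S} z e ≤ qv` then the choice is `z` itself,
and otherwise it is `e ↦ min r (z e)`, where `r ≥ 0` is the (unique) cutting height
satisfying `∑_{e ∈ S} min r (z e) = qv`. -/
def IsDivChoiceOn {E : Type*} (S : Finset E) (qv : ℝ≥0) (z w : E → ℝ≥0) : Prop :=
  ((∑ e ∈ S, z e) ≤ qv ∧ ∀ e ∈ S, w e = z e) ∨
    (qv < (∑ e ∈ S, z e) ∧
      ∃ r : ℝ≥0, (∑ e ∈ S, min r (z e)) = qv ∧ ∀ e ∈ S, w e = min r (z e))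

/-- The head `H(x_v)` of `x` at a vertex whose set of incident edges is `S` and whose
quota is `qv`: the set of edges of `S` where `x` attains its maximum over `S`, provided
`∑_{e ∈ S} x e = qv`, and `∅` otherwise. -/
def headOn {E : Type*} (S : Finset E) (qv : ℝ≥0) (x : E → ℝ≥0) : Set E :=
  {e | e ∈ S ∧ (∑ e' ∈ S, x e') = qv ∧ x e = S.sup x}

/-- An edge `e` is satiated for a vertex with incident edges `S` and quota `qv`
(w.r.t. capacities `b` and assignment `x`) if `e ∈ H(x_v) ∪ U(x_v)`,
i.e. `e` is in the head or its capacity is attained. -/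
def satiatedOn {E : Type*} (S : Finset E) (qv : ℝ≥0) (b x : E → ℝ≥0) (e : E) : Prop :=
  e ∈ headOn S qv x ∨ x e = b e

/-- The set of edges incident to firm `i` (edges `e` with `firm e = i`). -/
noncomputable def firmEdges {E F : Type*} [Fintype E] (firm : E → F) (i : F) : Finset E :=
  Finset.univ.filter fun e => firm e = i

/-- The set of edges incident to worker `j` (edges `e` with `worker e = j`). -/
noncomputable def workerEdges {E W : Type*} [Fintype E] (worker : E → W) (j : W) : Finset E :=
  Finset.univ.filter fun e => worker e = j

/-- A stable assignment of the diversifying bipartite market: the finite bipartite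
(multi)graph has parts `F` (firms) and `W` (workers) and edge set `E`, the edge `e`
joining firm `firm e` to worker `worker e`; `b` gives edge capacities and `qF`, `qW`
the vertex quotas. An assignment `x : E → ℝ≥0` is stable if it is admissible (`x ≤ b`),
rational at every vertex (`C_v(x_v) = x_v`), and has no blocking edge, i.e. every edge
is satiated for at least one of its two endpoints. -/
def StableBip {E F W : Type*} [Fintype E] (firm : E → F) (worker : E → W)
    (b : E → ℝ≥0) (qF : F → ℝ≥0) (qW : W → ℝ≥0) (x : E → ℝ≥0) : Prop :=
  (∀ e, x e ≤ b e) ∧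
  (∀ i : F, IsDivChoiceOn (firmEdges firm i) (qF i) x x) ∧
  (∀ j : W, IsDivChoiceOn (workerEdges worker j) (qW j) x x) ∧
  ∀ e : E, satiatedOn (firmEdges firm (firm e)) (qF (firm e)) b x e ∨
    satiatedOn (workerEdges worker (worker e)) (qW (worker e)) b x e

lemma IsDivChoiceOn.sum_le {E : Type*} {S : Finset E} {q : ℝ≥0} {z w : E → ℝ≥0}
    (h : IsDivChoiceOn S q z w) : ∑ e ∈ S, w e ≤ q := by
  rcases h with ⟨hz, hw⟩ | ⟨_, r, hr, hw⟩
  · exact (Finset.sum_congr rfl hw).trans_le hz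
  · exact ((Finset.sum_congr rfl hw).trans hr).le

lemma IsDivChoiceOn.notMem_headOn_of_lt {E : Type*} {S : Finset E} {q : ℝ≥0} {x y : E → ℝ≥0}
    (h : IsDivChoiceOn S q (fun e => max (x e) (y e)) x) {e : E} (hlt : y e < x e) :
    e ∉ headOn S q y := by
  rintro ⟨heS, hsum, hmax⟩
  have hyx : ∀ f ∈ S, y f ≤ x f := by
    rcases h with ⟨_, hx⟩ | ⟨_, r, _, hx⟩
    · intro f hf
      rw [hx f hf]
      exact le_max_right _ _
    · intro f hf
      have hyr : y f ≤ r := calc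
        y f ≤ S.sup y := Finset.le_sup hf
        _ = y e := hmax.symm
        _ ≤ x e := hlt.le
        _ ≤ r := (hx e heS).trans_le (min_le_left _ _)
      rw [hx f hf]
      exact le_min hyr (le_max_right _ _)
  have : q < q := calc
    q = ∑ f ∈ S, y f := hsum.symm
    _ < ∑ f ∈ S, x f := Finset.sum_lt_sum hyx ⟨e, heS, hlt⟩
    _ ≤ q := h.sum_le
  exact lt_irrefl q this

/-- `y_v ⪰ x_v` as soon as every edge on which `x` exceeds `y` lies in the head of `y`:
the choice from `x ∨ y` is then the cut at the height `max y`. -/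
lemma isDivChoiceOn_max_of_lt_mem_headOn {E : Type*} {S : Finset E} {q : ℝ≥0}
    {x y : E → ℝ≥0} (hy : IsDivChoiceOn S q y y)
    (hhead : ∀ e ∈ S, y e < x e → e ∈ headOn S q y) :
    IsDivChoiceOn S q (fun e => max (x e) (y e)) y := by
  by_cases hle : ∀ e ∈ S, x e ≤ y e
  · have hmax : ∀ e ∈ S, max (x e) (y e) = y e := fun e he => max_eq_right (hle e he)
    exact Or.inl ⟨(Finset.sum_congr rfl hmax).trans_le hy.sum_le, fun e he => (hmax e he).symm⟩
  push Not at hle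
  obtain ⟨e₀, he₀, hlt₀⟩ := hle
  obtain ⟨-, hsum, -⟩ := hhead e₀ he₀ hlt₀
  have hcut : ∀ f ∈ S, y f = min (S.sup y) (max (x f) (y f)) := by
    intro f hf
    rcases le_or_gt (x f) (y f) with hxy | hxy
    · rw [max_eq_right hxy, min_eq_right (Finset.le_sup hf)]
    · obtain ⟨-, -, hfmax⟩ := hhead f hf hxy
      rw [max_eq_left hxy.le, ← hfmax, min_eq_left hxy.le]
  refine Or.inr ⟨?_, S.sup y, ?_, hcut⟩
  · calc q = ∑ f ∈ S, y f := hsum.symm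
      _ < ∑ f ∈ S, max (x f) (y f) :=
        Finset.sum_lt_sum (fun f _ => le_max_right _ _) ⟨e₀, he₀, hlt₀.trans_le (le_max_left _ _)⟩
  · rw [← hsum]
    exact (Finset.sum_congr rfl hcut).symm

theorem stable_polarity_general {E F W : Type*} [Fintype E]
    (firm : E → F) (worker : E → W) (b : E → ℝ≥0) (qF : F → ℝ≥0) (qW : W → ℝ≥0)
    (x y : E → ℝ≥0)
    (hx : StableBip firm worker b qF qW x) (hy : StableBip firm worker b qF qW y)
    (hF : ∀ i : F, IsDivChoiceOn (firmEdges firm i) (qF i) (fun e => max (x e) (y e)) x) :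
    ∀ j : W, IsDivChoiceOn (workerEdges worker j) (qW j) (fun e => max (x e) (y e)) y := by
  obtain ⟨-, -, hyW, hyS⟩ := hy
  intro j
  refine isDivChoiceOn_max_of_lt_mem_headOn (hyW j) fun e he hlt => ?_
  have hworker : worker e = j := (Finset.mem_filter.mp he).2
  have hcap : y e ≠ b e := (hlt.trans_le (hx.1 e)).ne
  -- `e` is satiated for `y` neither by capacity nor at its firm, so stability puts it in `y`'s worker head.
  rcases hyS e with (hfirm | hfull) | (hwork | hfull)
  · exact absurd hfirm ((hF (firm e)).notMem_headOn_of_lt hlt)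
  · exact absurd hfull hcap
  · exact hworker ▸ hwork
  · exact absurd hfull hcap

/-- Polarity of the two sides: if `x` and `y` are stable assignments
such that `x_i ⪰ y_i` (i.e. `C_i(x_i ∨ y_i) = x_i`) for all firms `i ∈ F`, then
`y_j ⪰ x_j` (i.e. `C_j(y_j ∨ x_j) = y_j`) for all workers `j ∈ W`. -/
theorem stable_polarity {E F W : Type*} [Fintype E] [Fintype F] [Fintype W]
    (firm : E → F) (worker : E → W) (b : E → ℝ≥0) (qF : F → ℝ≥0) (qW : W → ℝ≥0)
    (x y : E → ℝ≥0)
    (hx : StableBip firm worker b qF qW x) (hy : StableBip firm worker b qF qW y)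
    (hF : ∀ i : F, IsDivChoiceOn (firmEdges firm i) (qF i) (fun e => max (x e) (y e)) x) :
    ∀ j : W, IsDivChoiceOn (workerEdges worker j) (qW j) (fun e => max (x e) (y e)) y :=
  stable_polarity_general firm worker b qF qW x y hx hy hF
end

section
/- For any finite graph G = (V, E) (not necessarily bipartite) with edge capacities b : E → ℝ≥0, vertex quotas q : V → ℝ≥0, and diversifying choice functions at all vertices, there exists exactly one stable assignment. -/
open scoped NNReal

attribute [local instance] Classical.propDecidable

/-- The set of edges of the (finite, not necessarily bipartite) graph `G` incident to
the vertex `v`. -/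
noncomputable def incEdges {V : Type*} [Fintype V] [DecidableEq V] (G : SimpleGraph V)
    [DecidableRel G.Adj] (v : V) : Finset G.edgeSet :=
  Finset.univ.filter fun e => v ∈ (e : Sym2 V)

/-- A stable assignment of the diversifying market on an arbitrary finite graph `G`
with edge capacities `b` and vertex quotas `q`: an assignment `x` on the edges of `G`
is stable if it is admissible (`x ≤ b`), rational at every vertex (`C_v(x_v) = x_v`),
and has no blocking edge, i.e. every edge is satiated for at least one of its two
endpoints. -/
def StableGraph {V : Type*} [Fintype V] [DecidableEq V] (G : SimpleGraph V)
    [DecidableRel G.Adj] (b : G.edgeSet → ℝ≥0) (q : V → ℝ≥0)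
    (x : G.edgeSet → ℝ≥0) : Prop :=
  (∀ e, x e ≤ b e) ∧
  (∀ v : V, IsDivChoiceOn (incEdges G v) (q v) x x) ∧
  ∀ e : G.edgeSet, ∃ v ∈ (e : Sym2 V), satiatedOn (incEdges G v) (q v) b x e

/-!
Uniqueness: if two stable assignments `x ≠ y` differ, take a differing edge `e` with
`max (x e) (y e)` minimal, say `y e < x e`. Then `e` lies in the head of a saturated vertex `v`
for `y`; as `x` respects the quota of `v`, some edge `e'` at `v` has `x e' < y e' ≤ y e`, a
differing edge with a smaller maximum.

Existence is water-filling. Let `ℓ v` be the level with `∑ min (ℓ v) (b e) = min (q v) (∑ b e)`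
over the edges at `v`, and let `u` be a vertex of lowest level. Cap the edges at `u` at `ℓ u`,
drop `u` and solve for the other vertices recursively. Since no vertex has a level below `ℓ u`,
a stable assignment is at least `min (ℓ u) (b e)` everywhere, so the edges at `u` receive exactly
their capped capacity: `u` fills its quota, and an edge capped strictly below `b` is in its head.
-/

lemma isDivChoiceOn_self_iff {E : Type*} {S : Finset E} {qv : ℝ≥0} {x : E → ℝ≥0} :
    IsDivChoiceOn S qv x x ↔ ∑ e ∈ S, x e ≤ qv := by
  refine ⟨?_, fun h => Or.inl ⟨h, fun _ _ => rfl⟩⟩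
  rintro (⟨h, -⟩ | ⟨hlt, r, hsum, hx⟩)
  · exact h
  · rw [Finset.sum_congr rfl fun e he => (hx e he).symm] at hsum
    exact absurd hsum hlt.ne'

lemma exists_sum_min_eq {E : Type*} (S : Finset E) (c : E → ℝ≥0) {a : ℝ≥0}
    (ha : a ≤ ∑ e ∈ S, c e) : ∃ r : ℝ≥0, ∑ e ∈ S, min r (c e) = a := by
  have hsup : ∑ e ∈ S, min (S.sup c) (c e) = ∑ e ∈ S, c e :=
    Finset.sum_congr rfl fun e he => min_eq_right (Finset.le_sup he)
  have hcont : ContinuousOn (fun r : ℝ≥0 => ∑ e ∈ S, min r (c e)) (Set.Icc 0 (S.sup c)) :=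
    (continuous_finsetSum S fun e _ => continuous_id.min continuous_const).continuousOn
  obtain ⟨r, -, hr⟩ := intermediate_value_Icc zero_le hcont ⟨by simp, hsup ▸ ha⟩
  exact ⟨r, hr⟩

section StableOn

variable {V E : Type*} (S : V → Finset E) (q : V → ℝ≥0) (b : E → ℝ≥0)

/-- Stability for an arbitrary incidence structure, `S v` being the set of edges at `v`, in which
only the vertices of `A` carry a quota. -/
structure IsStableOn (A : Finset V) (x : E → ℝ≥0) : Prop where
  le_cap : ∀ e, x e ≤ b e
  sum_le : ∀ v ∈ A, ∑ e ∈ S v, x e ≤ q v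
  eq_cap_or_mem_headOn : ∀ e, x e = b e ∨ ∃ v ∈ A, e ∈ headOn (S v) (q v) x

variable {S q b} {A : Finset V} {x y : E → ℝ≥0}

lemma isStableOn_empty_cap : IsStableOn S q b ∅ b :=
  ⟨fun _ => le_rfl, by simp, fun _ => Or.inl rfl⟩

lemma IsStableOn.exists_lt_of_lt (hx : IsStableOn S q b A x) (hy : IsStableOn S q b A y)
    {e : E} (h : y e < x e) : ∃ e', x e' < y e' ∧ y e' < x e := by
  obtain hb | ⟨v, hv, he, hsum, hmax⟩ := hy.eq_cap_or_mem_headOn e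
  · exact absurd (hb ▸ hx.le_cap e) h.not_ge
  obtain ⟨e', he', hlt⟩ : ∃ e' ∈ S v, x e' < y e' := by
    by_contra! hge
    exact (Finset.sum_lt_sum hge ⟨e, he, h⟩).not_ge (hsum ▸ hx.sum_le v hv)
  exact ⟨e', hlt, (hmax ▸ Finset.le_sup (f := y) he').trans_lt h⟩

lemma IsStableOn.exists_ne_max_lt (hx : IsStableOn S q b A x) (hy : IsStableOn S q b A y)
    {e : E} (h : x e ≠ y e) : ∃ e', x e' ≠ y e' ∧ max (x e') (y e') < max (x e) (y e) := by
  rcases h.lt_or_gt with h | h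
  · obtain ⟨e', h₁, h₂⟩ := hy.exists_lt_of_lt hx h
    exact ⟨e', h₁.ne', by rwa [max_eq_left h₁.le, max_eq_right h.le]⟩
  · obtain ⟨e', h₁, h₂⟩ := hx.exists_lt_of_lt hy h
    exact ⟨e', h₁.ne, by rwa [max_eq_right h₁.le, max_eq_left h.le]⟩

theorem IsStableOn.eq [Finite E] (hx : IsStableOn S q b A x) (hy : IsStableOn S q b A y) :
    x = y := by
  by_contra hne
  obtain ⟨e, he, hmin⟩ := Set.exists_min_image {e | x e ≠ y e} (fun e => max (x e) (y e))
    (Set.toFinite _) (Function.ne_iff.1 hne)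
  obtain ⟨e', he', hlt⟩ := hx.exists_ne_max_lt hy he
  exact (hmin e' he').not_gt hlt

lemma IsStableOn.min_le (hx : IsStableOn S q b A x) {m : ℝ≥0}
    (hm : ∀ v ∈ A, ∑ e ∈ S v, min m (b e) ≤ q v) (e : E) : min m (b e) ≤ x e := by
  by_contra! hlt
  obtain hb | ⟨v, hv, he, hsum, hmax⟩ := hx.eq_cap_or_mem_headOn e
  · exact (hb ▸ hlt).not_ge (min_le_right _ _)
  have hle : ∀ e' ∈ S v, x e' ≤ min m (b e') := fun e' he' =>
    le_min ((hmax ▸ Finset.le_sup (f := x) he').trans (hlt.trans_le (min_le_left _ _)).le)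
      (hx.le_cap e')
  exact (Finset.sum_lt_sum hle ⟨e, he, hlt⟩).not_ge ((hm v hv).trans_eq hsum.symm)

noncomputable def capOn (T : Finset E) (m : ℝ≥0) (b : E → ℝ≥0) (e : E) : ℝ≥0 :=
  if e ∈ T then min m (b e) else b e

lemma capOn_le (T : Finset E) (m : ℝ≥0) (e : E) : capOn T m b e ≤ b e := by
  unfold capOn; split_ifs <;> simp

lemma min_capOn (T : Finset E) (m : ℝ≥0) (e : E) : min m (capOn T m b e) = min m (b e) := by
  unfold capOn; split_ifs <;> simp

lemma mem_headOn_of_eq_min {T : Finset E} {qv m : ℝ≥0}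
    (hlev : ∑ e ∈ T, min m (b e) = min qv (∑ e ∈ T, b e)) (hx : ∀ e ∈ T, x e = min m (b e))
    {e : E} (he : e ∈ T) (hlt : m < b e) : e ∈ headOn T qv x := by
  have hsum : ∑ e ∈ T, x e = ∑ e ∈ T, min m (b e) := Finset.sum_congr rfl hx
  have hstrict : min qv (∑ e ∈ T, b e) < ∑ e ∈ T, b e :=
    hlev ▸ Finset.sum_lt_sum (fun _ _ => min_le_right _ _) ⟨e, he, min_lt_of_left_lt hlt⟩
  refine ⟨he, ?_, le_antisymm (Finset.le_sup (f := x) he) (Finset.sup_le fun e' he' => ?_)⟩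
  · rw [hsum, hlev, min_eq_left]
    exact ((min_lt_iff.1 hstrict).resolve_right (lt_irrefl _)).le
  · rw [hx e' he', hx e he, min_eq_left hlt.le]
    exact min_le_left _ _

/-- The recursive step of water-filling: `hlev` says that `m` is the level of `u`, and `hm` that
no vertex of `A` has a lower one. -/
lemma IsStableOn.of_erase_capOn {u : V} (hu : u ∈ A) {m : ℝ≥0}
    (hlev : ∑ e ∈ S u, min m (b e) = min (q u) (∑ e ∈ S u, b e))
    (hm : ∀ v ∈ A, ∑ e ∈ S v, min m (b e) ≤ q v)
    (hx : IsStableOn S q (capOn (S u) m b) (A.erase u) x) : IsStableOn S q b A x := by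
  have hlow : ∀ e, min m (b e) ≤ x e := fun e => min_capOn (b := b) (S u) m e ▸
    hx.min_le (fun v hv => by simpa only [min_capOn] using hm v (Finset.mem_of_mem_erase hv)) e
  have hxu : ∀ e ∈ S u, x e = min m (b e) := fun e he =>
    le_antisymm (by simpa [capOn, he] using hx.le_cap e) (hlow e)
  refine ⟨fun e => (hx.le_cap e).trans (capOn_le _ _ e), fun v hv => ?_, fun e => ?_⟩
  · rcases eq_or_ne v u with rfl | hvu
    · rw [Finset.sum_congr rfl hxu, hlev]
      exact min_le_left _ _
    · exact hx.sum_le v (Finset.mem_erase.2 ⟨hvu, hv⟩)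
  · obtain hb | ⟨v, hv, hhead⟩ := hx.eq_cap_or_mem_headOn e
    · by_cases he : e ∈ S u
      · rcases le_or_gt (b e) m with hbm | hmb
        · exact Or.inl (by rw [hxu e he, min_eq_right hbm])
        · exact Or.inr ⟨u, hu, mem_headOn_of_eq_min hlev hxu he hmb⟩
      · exact Or.inl (by simpa [capOn, he] using hb)
    · exact Or.inr ⟨v, Finset.mem_of_mem_erase hv, hhead⟩

variable (S q)

theorem exists_isStableOn (A : Finset V) (b : E → ℝ≥0) : ∃ x, IsStableOn S q b A x := by
  induction A using Finset.strongInduction generalizing b with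
  | H A ih =>
    rcases A.eq_empty_or_nonempty with rfl | hA
    · exact ⟨b, isStableOn_empty_cap⟩
    choose ℓ hℓ using fun v => exists_sum_min_eq (S v) b (min_le_right (q v) (∑ e ∈ S v, b e))
    obtain ⟨u, hu, hmin⟩ := A.exists_min_image ℓ hA
    obtain ⟨x, hx⟩ := ih (A.erase u) (A.erase_ssubset hu) (capOn (S u) (ℓ u) b)
    refine ⟨x, hx.of_erase_capOn hu (hℓ u) fun v hv => ?_⟩
    calc ∑ e ∈ S v, min (ℓ u) (b e)
        ≤ ∑ e ∈ S v, min (ℓ v) (b e) :=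
          Finset.sum_le_sum fun e _ => min_le_min_right _ (hmin v hv)
      _ = min (q v) (∑ e ∈ S v, b e) := hℓ v
      _ ≤ q v := min_le_left _ _

end StableOn

lemma stableGraph_iff {V : Type*} [Fintype V] [DecidableEq V] {G : SimpleGraph V}
    [DecidableRel G.Adj] {b : G.edgeSet → ℝ≥0} {q : V → ℝ≥0} {x : G.edgeSet → ℝ≥0} :
    StableGraph G b q x ↔ IsStableOn (incEdges G) q b Finset.univ x := by
  simp only [StableGraph, isDivChoiceOn_self_iff, satiatedOn]
  constructor
  · rintro ⟨hb, hq, hsat⟩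
    refine ⟨hb, fun v _ => hq v, fun e => ?_⟩
    obtain ⟨v, -, hhead | hcap⟩ := hsat e
    · exact Or.inr ⟨v, Finset.mem_univ v, hhead⟩
    · exact Or.inl hcap
  · rintro ⟨hb, hq, hsat⟩
    refine ⟨hb, fun v => hq v (Finset.mem_univ v), fun e => ?_⟩
    obtain hcap | ⟨v, -, hhead⟩ := hsat e
    · exact ⟨_, Sym2.out_fst_mem _, Or.inr hcap⟩
    · exact ⟨v, by simpa [incEdges] using hhead.1, Or.inl hhead⟩

/-- For any finite graph `G = (V, E)` (not necessarily bipartite)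
with edge capacities `b : E → ℝ≥0`, vertex quotas `q : V → ℝ≥0`, and diversifying
choice functions at all vertices, there exists exactly one stable assignment. -/
theorem stable_existsUnique_graph {V : Type*} [Fintype V] [DecidableEq V]
    (G : SimpleGraph V) [DecidableRel G.Adj] (b : G.edgeSet → ℝ≥0) (q : V → ℝ≥0) :
    ∃! x : G.edgeSet → ℝ≥0, StableGraph G b q x := by
  simp only [stableGraph_iff]
  obtain ⟨x, hx⟩ := exists_isStableOn (incEdges G) q Finset.univ b
  exact ⟨x, hx, fun y hy => hy.eq hx⟩
end
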